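/- arXiv:2109.08400 — 3 statements merged into one kernel-verified Lean document; each statement's English description precedes it below -/
import Mathlib

section
/- Let p be a prime, n a positive integer, and A, B subsets of G = ℤ_p × ℤ_{p^n}. Then (A,B) is a spectral pair if and only if (B,A) is a spectral pair. -/
/-!
Put `M = (χ_b(a))_{b ∈ B, a ∈ A}`, a square matrix when `|A| = |B|`. Since `(g, h) ↦ χ_g(h)` is a
symmetric bicharacter, `χ_b(a) · conj χ_{b'}(a) = χ_{b-b'}(a)`, so `(A, B)` being a spectral pair
says exactly that `M Mᴴ = |A| · 1`. For square matrices this is equivalent to `Mᴴ M = |A| · 1`,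
whose entries are, again by symmetry, the sums `χ_{a-a'}(B)`.
-/

open Complex Pointwise

/-- The inner product on `ℤ_p × ℤ_{p^n}`: `⟨u,v⟩ = p^(n-1)·u₁·v₁ + u₂·v₂` in `ℤ_{p^n}`. -/
def inn (p n : ℕ) (u v : ZMod p × ZMod (p ^ n)) : ZMod (p ^ n) :=
  (p : ZMod (p ^ n)) ^ (n - 1) * (u.1.val : ZMod (p ^ n)) * (v.1.val : ZMod (p ^ n)) +
    u.2 * v.2

/-- The character `χ_g(h) = e^(2πi⟨g,h⟩/p^n)`. -/
noncomputable def chi (p n : ℕ) (g h : ZMod p × ZMod (p ^ n)) : ℂ :=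
  Complex.exp (2 * Real.pi * Complex.I * ((inn p n g h).val : ℂ) / ((p : ℂ) ^ n))

/-- `χ_g(A) = Σ_{a ∈ A} χ_g(a)`. -/
noncomputable def chiSum (p n : ℕ) (g : ZMod p × ZMod (p ^ n))
    (A : Finset (ZMod p × ZMod (p ^ n))) : ℂ :=
  ∑ a ∈ A, chi p n g a

/-- The zero set `Z_A = {g : χ_g(A) = 0}`. -/
def zeroSet (p n : ℕ) (A : Finset (ZMod p × ZMod (p ^ n))) :
    Set (ZMod p × ZMod (p ^ n)) :=
  {g | chiSum p n g A = 0}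

/-- `(A,B)` is a spectral pair: `|A| = |B|` and `χ_{b-b'}(A) = 0` for distinct `b,b' ∈ B`. -/
def SpectralPair (p n : ℕ) (A B : Finset (ZMod p × ZMod (p ^ n))) : Prop :=
  A.card = B.card ∧ ∀ b ∈ B, ∀ b' ∈ B, b ≠ b' → chiSum p n (b - b') A = 0

/-- `A` is a spectral set: some `B` makes `(A,B)` a spectral pair. -/
def SpectralSet (p n : ℕ) (A : Finset (ZMod p × ZMod (p ^ n))) : Prop :=
  ∃ B : Finset (ZMod p × ZMod (p ^ n)), SpectralPair p n A B

/-- `(A,T)` is a tiling pair: every `g` has a unique representation `g = a + t`, `a ∈ A`, `t ∈ T`. -/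
def TilingPair (p n : ℕ) (A T : Finset (ZMod p × ZMod (p ^ n))) : Prop :=
  ∀ g : ZMod p × ZMod (p ^ n),
    ∃! x : (ZMod p × ZMod (p ^ n)) × (ZMod p × ZMod (p ^ n)),
      x.1 ∈ A ∧ x.2 ∈ T ∧ g = x.1 + x.2

/-- `A` tiles `ℤ_p × ℤ_{p^n}` by translation. -/
def Tiles (p n : ℕ) (A : Finset (ZMod p × ZMod (p ^ n))) : Prop :=
  ∃ T : Finset (ZMod p × ZMod (p ^ n)), TilingPair p n A T

namespace Matrix

variable {m n K : Type*} [Fintype m] [Fintype n] [DecidableEq m] [DecidableEq n] [Field K]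

theorem mul_eq_smul_one_comm_of_equiv (e : m ≃ n) {M : Matrix m n K} {N : Matrix n m K}
    {c : K} (hc : c ≠ 0) (h : M * N = c • 1) : N * M = c • 1 := by
  have hM : M * (c⁻¹ • N) = 1 := by
    rw [Matrix.mul_smul, h, smul_smul, inv_mul_cancel₀ hc, one_smul]
  rw [← smul_right_inj (inv_ne_zero hc), ← Matrix.smul_mul, (mul_eq_one_comm_of_equiv e).mp hM,
    smul_smul, inv_mul_cancel₀ hc, one_smul]

end Matrix

def charMatrix {G K : Type*} [AddMonoid G] [Monoid K] (ψ : G → AddChar G K) (X Y : Finset G) :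
    Matrix X Y K :=
  Matrix.of fun x y => ψ x y

section SymmetricBicharacter

open Finset Matrix

variable {G K : Type*} [AddCommGroup G] [Finite G] [RCLike K] {ψ : G → AddChar G K}

theorem AddChar.apply_sub_of_symm (hψ : ∀ g h, ψ g h = ψ h g) (g g' h : G) :
    ψ (g - g') h = ψ g h * (starRingEnd K) (ψ g' h) := by
  rw [hψ, AddChar.map_sub_eq_div, div_eq_mul_inv, AddChar.inv_apply_eq_conj, hψ h, hψ h]

theorem charMatrix_mul_conjTranspose_apply (hψ : ∀ g h, ψ g h = ψ h g) (X Y : Finset G)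
    (x x' : X) :
    (charMatrix ψ X Y * (charMatrix ψ X Y)ᴴ) x x' = ∑ y ∈ Y, ψ (x - x') y := by
  simp only [Matrix.mul_apply, Matrix.conjTranspose_apply, charMatrix, Matrix.of_apply,
    RCLike.star_def, ← AddChar.apply_sub_of_symm hψ]
  exact Finset.sum_coe_sort Y _

theorem conjTranspose_charMatrix_mul_apply (hψ : ∀ g h, ψ g h = ψ h g) (X Y : Finset G)
    (y' y : Y) :
    ((charMatrix ψ X Y)ᴴ * charMatrix ψ X Y) y' y = ∑ x ∈ X, ψ (y - y') x := by
  rw [← Finset.sum_coe_sort X]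
  refine Finset.sum_congr rfl fun x _ => ?_
  rw [AddChar.apply_sub_of_symm hψ, hψ y, hψ y', mul_comm]
  rfl

theorem sum_apply_sub_eq_zero_comm (hψ : ∀ g h, ψ g h = ψ h g) {A B : Finset G}
    (hAB : #A = #B) (hB : ∀ b ∈ B, ∀ b' ∈ B, b ≠ b' → ∑ a ∈ A, ψ (b - b') a = 0) :
    ∀ a ∈ A, ∀ a' ∈ A, a ≠ a' → ∑ b ∈ B, ψ (a - a') b = 0 := by
  classical
  intro a ha a' ha' hne
  have hM : charMatrix ψ B A * (charMatrix ψ B A)ᴴ = (#A : K) • 1 := by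
    ext b b'
    rw [charMatrix_mul_conjTranspose_apply hψ, Matrix.smul_apply, Matrix.one_apply]
    split_ifs with hbb
    · simp [hbb, hψ 0]
    · simp [hB _ b.2 _ b'.2 (Subtype.coe_injective.ne hbb)]
  have hcard : Fintype.card B = Fintype.card A := by simpa using hAB.symm
  have hM' := Matrix.mul_eq_smul_one_comm_of_equiv (Fintype.equivOfCardEq hcard)
    (by simpa using Finset.ne_empty_of_mem ha) hM
  simpa [conjTranspose_charMatrix_mul_apply hψ, Matrix.one_apply, hne.symm] using
    congrFun₂ hM' ⟨a', ha'⟩ ⟨a, ha⟩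

end SymmetricBicharacter

section Pairing

variable (p n : ℕ)

theorem inn_comm (u v : ZMod p × ZMod (p ^ n)) : inn p n u v = inn p n v u := by
  unfold inn; ring

theorem pow_pred_mul_natCast_mod (m : ℕ) :
    (p : ZMod (p ^ n)) ^ (n - 1) * ((m % p : ℕ) : ZMod (p ^ n)) =
      (p : ZMod (p ^ n)) ^ (n - 1) * m := by
  have hpow : (p : ZMod (p ^ n)) ^ (n - 1) * p = 0 := by
    rw [← pow_succ, ← Nat.cast_pow, ZMod.natCast_eq_zero_iff]
    exact pow_dvd_pow p (by omega)
  conv_rhs => rw [← Nat.mod_add_div m p]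
  push_cast
  linear_combination -((m / p : ℕ) : ZMod (p ^ n)) * hpow

variable [NeZero p]

theorem inn_add_right (u v w : ZMod p × ZMod (p ^ n)) :
    inn p n u (v + w) = inn p n u v + inn p n u w := by
  have hmod := pow_pred_mul_natCast_mod p n (v.1.val + w.1.val)
  push_cast at hmod
  simp only [inn, Prod.snd_add, Prod.fst_add, ZMod.val_add]
  linear_combination (u.1.val : ZMod (p ^ n)) * hmod

theorem chi_eq_stdAddChar (g h : ZMod p × ZMod (p ^ n)) :
    chi p n g h = ZMod.stdAddChar (inn p n g h) := by
  rw [ZMod.stdAddChar_apply, ZMod.toCircle_apply, chi]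
  push_cast
  rfl

noncomputable def chiChar (g : ZMod p × ZMod (p ^ n)) : AddChar (ZMod p × ZMod (p ^ n)) ℂ :=
  ZMod.stdAddChar.compAddMonoidHom (AddMonoidHom.mk' (inn p n g) (inn_add_right p n g))

theorem chiChar_apply (g h : ZMod p × ZMod (p ^ n)) : chiChar p n g h = chi p n g h :=
  (chi_eq_stdAddChar p n g h).symm

theorem chiChar_comm (g h : ZMod p × ZMod (p ^ n)) : chiChar p n g h = chiChar p n h g := by
  rw [chiChar_apply, chiChar_apply, chi, chi, inn_comm]

end Pairing

theorem spectralPair_comm_general (p n : ℕ) (hp : p.Prime)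
    (A B : Finset (ZMod p × ZMod (p ^ n))) :
    SpectralPair p n A B ↔ SpectralPair p n B A := by
  have : NeZero p := ⟨hp.ne_zero⟩
  have swap : ∀ A B : Finset (ZMod p × ZMod (p ^ n)), SpectralPair p n A B →
      SpectralPair p n B A := by
    rintro A B ⟨hcard, horth⟩
    refine ⟨hcard.symm, ?_⟩
    simp only [chiSum, ← chiChar_apply] at horth ⊢
    exact sum_apply_sub_eq_zero_comm (chiChar_comm p n) hcard horth
  exact ⟨swap A B, swap B A⟩

/-- `(A,B)` is a spectral pair iff `(B,A)` is a spectral pair. -/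
theorem spectralPair_comm (p n : ℕ) (hp : p.Prime) (hn : 1 ≤ n)
    (A B : Finset (ZMod p × ZMod (p ^ n))) :
    SpectralPair p n A B ↔ SpectralPair p n B A :=
  spectralPair_comm_general p n hp A B
end

section
/- Let p be a prime, n a positive integer, and A a subset of G = ℤ_p × ℤ_{p^n}. Suppose there exist a ∈ ℤ_p, an integer s ≥ 1, and integers 0 ≤ i₁ < i₂ < ⋯ < i_s ≤ n−1 such that (a, p^{i₁}) ∈ Z_A and (0, p^{i_r}) ∈ Z_A for all r = 2, …, s. Then p^s divides |A|. -/
open Complex Pointwise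

/-!
If `g ∈ Z_A` then the values of `⟨g, ·⟩` on `A` form a vanishing sum of `p^n`-th roots of unity;
since the `p^n`-th cyclotomic polynomial is irreducible, every Galois conjugate of that sum
vanishes too, and Fourier inversion then shows that the fibres of `⟨g, ·⟩` over `x` and over
`x + p^(n-1)` have the same size.

Let `C(e, c)` count the `u ∈ A` with `u₂ ≡ c mod p^(n-e)`, so that `C(n, c) = |A|` and
`C(e + 1, c)` is a sum of `p` values `C(e, c')`. For `g = (b, p^i)` one has
`p ⟨g, u⟩ = p^(i+1) u₂`, so `C(i + 1, c)` is the number of `u` with `⟨g, u⟩` in a coset of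
`⟨p^(n-1)⟩`, which is `p` times a single fibre. For `g = (a, p^(i₁))` this gives
`p ∣ C(i₁ + 1, ·)`; for `g = (0, p^(i_r))` the fibre is `C(i_r, ·)`, so
`C(i_r + 1, ·) = p C(i_r, ·)` gains one more factor of `p`. Going up from `i_s + 1` to `n`
gives `p^s ∣ |A|`.
-/

open Finset Polynomial ZMod

namespace ZMod

section RootsOfUnity

variable {N : ℕ} [NeZero N] {ι : Type*}

lemma isPrimitiveRoot_stdAddChar {t : ZMod N} (ht : IsUnit t) :
    IsPrimitiveRoot (stdAddChar t) N := by
  have h₁ : IsPrimitiveRoot (stdAddChar (1 : ZMod N)) N := by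
    have h := stdAddChar_coe (N := N) 1
    push_cast at h
    rw [h, mul_one]
    exact Complex.isPrimitiveRoot_exp N (NeZero.ne N)
  have h := h₁.pow_of_coprime _ (val_coe_unit_coprime ht.unit)
  rwa [← AddChar.map_nsmul_eq_pow, nsmul_one, IsUnit.unit_spec, natCast_zmod_val] at h

/-- Multiplying by a unit is a Galois conjugation: both `ψ 1` and `ψ t` have the cyclotomic
polynomial as minimal polynomial over `ℚ`. -/
lemma sum_stdAddChar_mul_eq_zero (s : Finset ι) (f : ι → ZMod N)
    (hf : ∑ i ∈ s, stdAddChar (f i) = 0) {t : ZMod N} (ht : IsUnit t) :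
    ∑ i ∈ s, stdAddChar (t * f i) = 0 := by
  set P : ℚ[X] := ∑ i ∈ s, X ^ (f i).val
  have haeval : ∀ t : ZMod N, aeval (stdAddChar t) P = ∑ i ∈ s, stdAddChar (t * f i) := by
    intro t
    simp only [P, map_sum, map_pow, aeval_X, ← AddChar.map_nsmul_eq_pow, nsmul_eq_mul,
      natCast_zmod_val, mul_comm]
  have hminpoly : ∀ {t : ZMod N}, IsUnit t → minpoly ℚ (stdAddChar t) = cyclotomic N ℚ :=
    fun ht => (cyclotomic_eq_minpoly_rat (isPrimitiveRoot_stdAddChar ht) (NeZero.pos N)).symm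
  obtain ⟨Q, hQ⟩ : cyclotomic N ℚ ∣ P := by
    rw [← hminpoly isUnit_one]
    exact minpoly.dvd ℚ _ (by simpa [haeval] using hf)
  rw [← haeval, hQ, map_mul, ← hminpoly ht, minpoly.aeval, zero_mul]

lemma sum_sum_stdAddChar_mul_sub (s : Finset ι) (f : ι → ZMod N) (y : ZMod N) :
    ∑ t : ZMod N, ∑ i ∈ s, stdAddChar (t * (f i - y)) = N * #{i ∈ s | f i = y} := by
  rw [sum_comm, natCast_card_filter, mul_sum]
  refine sum_congr rfl fun i _ => ?_
  simp only [AddChar.sum_mulShift _ (isPrimitive_stdAddChar N), card, sub_eq_zero]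
  split_ifs <;> simp

end RootsOfUnity

section PrimePower

lemma natCast_mul_pow_pred_eq_zero (p n : ℕ) :
    (p : ZMod (p ^ n)) * (p : ZMod (p ^ n)) ^ (n - 1) = 0 := by
  rcases n with _ | n
  · have := subsingleton_iff.2 (pow_zero p)
    exact Subsingleton.elim _ _
  · rw [mul_pow_sub_one n.succ_ne_zero, ← Nat.cast_pow, natCast_self]

variable {p n : ℕ} {ι : Type*}

lemma natCast_mul_pow_pred_eq_natCast (j : ℕ) :
    (j : ZMod (p ^ n)) * (p : ZMod (p ^ n)) ^ (n - 1) =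
      ((j * p ^ (n - 1) : ℕ) : ZMod (p ^ n)) := by
  push_cast; rfl

lemma mul_pow_pred_eq_zero_of_not_isUnit (hp : p.Prime) {t : ZMod (p ^ n)} (ht : ¬IsUnit t) :
    t * (p : ZMod (p ^ n)) ^ (n - 1) = 0 := by
  have : NeZero (p ^ n) := ⟨pow_ne_zero n hp.ne_zero⟩
  obtain ⟨w, hw⟩ : p ∣ t.val := by
    by_contra h
    exact ht (natCast_zmod_val t ▸ (isUnit_iff_coprime _ _).2
      (((Nat.Prime.coprime_iff_not_dvd hp).2 h).symm.pow_right n))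
  rw [← natCast_zmod_val t, hw, Nat.cast_mul, mul_right_comm, natCast_mul_pow_pred_eq_zero,
    zero_mul]

lemma natCast_mul_eq_zero_iff (hp : p ≠ 0) (hn : n ≠ 0) {z : ZMod (p ^ n)} :
    (p : ZMod (p ^ n)) * z = 0 ↔ ∃ j < p, z = j * (p : ZMod (p ^ n)) ^ (n - 1) := by
  have : NeZero (p ^ n) := ⟨pow_ne_zero n hp⟩
  constructor
  · intro hz
    rw [← natCast_zmod_val z, ← Nat.cast_mul, natCast_eq_zero_iff] at hz
    obtain ⟨j, hj⟩ : p ^ (n - 1) ∣ z.val :=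
      (Nat.mul_dvd_mul_iff_left (Nat.pos_of_ne_zero hp)).1 ((mul_pow_sub_one hn p).symm ▸ hz)
    refine ⟨j, ?_, ?_⟩
    · have := z.val_lt
      rw [hj, ← mul_pow_sub_one hn p, mul_comm p] at this
      exact Nat.lt_of_mul_lt_mul_left this
    · rw [natCast_mul_pow_pred_eq_natCast, mul_comm, ← hj, natCast_zmod_val]
  · rintro ⟨j, -, rfl⟩
    rw [mul_left_comm, natCast_mul_pow_pred_eq_zero, mul_zero]

lemma natCast_mul_pow_pred_inj (hn : n ≠ 0) {j j' : ℕ} (hj : j < p) (hj' : j' < p)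
    (h : (j : ZMod (p ^ n)) * (p : ZMod (p ^ n)) ^ (n - 1) = j' * (p : ZMod (p ^ n)) ^ (n - 1)) :
    j = j' := by
  have hlt : ∀ {k}, k < p → k * p ^ (n - 1) < p ^ n := fun hk => by
    rw [← mul_pow_sub_one hn p]
    exact Nat.mul_lt_mul_of_pos_right hk (pow_pos (by omega) _)
  rw [natCast_mul_pow_pred_eq_natCast, natCast_mul_pow_pred_eq_natCast,
    natCast_eq_natCast_iff', Nat.mod_eq_of_lt (hlt hj), Nat.mod_eq_of_lt (hlt hj')] at h
  exact Nat.eq_of_mul_eq_mul_right (pow_pos (by omega) _) h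

lemma card_filter_natCast_mul_eq_zero (hp : p ≠ 0) (hn : n ≠ 0) (s : Finset ι)
    (F : ι → ZMod (p ^ n)) :
    #{i ∈ s | (p : ZMod (p ^ n)) * F i = 0} =
      ∑ j ∈ range p, #{i ∈ s | F i = j * (p : ZMod (p ^ n)) ^ (n - 1)} := by
  classical
  rw [← card_biUnion]
  · congr 1
    ext i
    simp only [mem_filter, mem_biUnion, mem_range, natCast_mul_eq_zero_iff hp hn]
    tauto
  · intro j hj j' hj' hne
    refine disjoint_filter.2 fun i _ hi hi' => hne ?_
    exact natCast_mul_pow_pred_inj hn (mem_range.1 hj) (mem_range.1 hj') (hi.symm.trans hi')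

/-- Fourier inversion: a unit `t` kills the Fourier coefficient of both fibres, while a non-unit
`t` annihilates `p^(n-1)` and so does not see the shift. -/
theorem card_filter_eq_add_natCast_mul_pow_pred (hp : p.Prime) [NeZero (p ^ n)] (s : Finset ι)
    (f : ι → ZMod (p ^ n)) (hf : ∑ i ∈ s, stdAddChar (f i) = 0) (x : ZMod (p ^ n))
    (j : ℕ) :
    #{i ∈ s | f i = x + j * (p : ZMod (p ^ n)) ^ (n - 1)} = #{i ∈ s | f i = x} := by
  set q := (p : ZMod (p ^ n)) ^ (n - 1)
  have hshift : ∀ y, #{i ∈ s | f i = y + q} = #{i ∈ s | f i = y} := by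
    intro y
    have hcoeff : ∀ t : ZMod (p ^ n),
        ∑ i ∈ s, stdAddChar (t * (f i - (y + q))) =
          ∑ i ∈ s, stdAddChar (t * (f i - y)) := by
      intro t
      by_cases ht : IsUnit t
      · have hzero : ∀ z, ∑ i ∈ s, stdAddChar (t * (f i - z)) = 0 := fun z => by
          simp only [sub_eq_add_neg, mul_add, AddChar.map_add_eq_mul, ← sum_mul,
            sum_stdAddChar_mul_eq_zero s f hf ht, zero_mul]
        rw [hzero, hzero]
      · have htq := mul_pow_pred_eq_zero_of_not_isUnit hp ht
        exact sum_congr rfl fun i _ => by rw [mul_sub, mul_add, htq, add_zero, mul_sub]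
    have h := sum_congr rfl fun t (_ : t ∈ univ) => hcoeff t
    rw [sum_sum_stdAddChar_mul_sub, sum_sum_stdAddChar_mul_sub] at h
    exact_mod_cast mul_left_cancel₀ (NeZero.ne _) h
  induction j with
  | zero => simp
  | succ j ih => rw [Nat.cast_succ, add_one_mul, ← add_assoc, hshift, ih]

end PrimePower

end ZMod

/-- `#{i ∈ s | f i ≡ c [MOD p^(n-e)]}`, the congruence being written `p^e * (f i - c) = 0`. -/
def cardCongr (p n : ℕ) {ι : Type*} (s : Finset ι) (f : ι → ZMod (p ^ n)) (e : ℕ)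
    (c : ZMod (p ^ n)) : ℕ :=
  #{i ∈ s | (p : ZMod (p ^ n)) ^ e * (f i - c) = 0}

section CardCongr

variable {p n : ℕ} {ι : Type*} (s : Finset ι) (f : ι → ZMod (p ^ n))

lemma cardCongr_self (c : ZMod (p ^ n)) : cardCongr p n s f n c = #s := by
  simp [cardCongr, ← Nat.cast_pow]

lemma cardCongr_succ (hp : p ≠ 0) {e : ℕ} (he : e < n) (c : ZMod (p ^ n)) :
    cardCongr p n s f (e + 1) c =
      ∑ j ∈ range p, cardCongr p n s f e (c + j * (p : ZMod (p ^ n)) ^ (n - e - 1)) := by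
  simp only [cardCongr, pow_succ', mul_assoc]
  rw [card_filter_natCast_mul_eq_zero hp (by omega)]
  refine sum_congr rfl fun j _ => congr_arg card (filter_congr fun i _ => ?_)
  have hpow : (p : ZMod (p ^ n)) ^ e * (p : ZMod (p ^ n)) ^ (n - e - 1) =
      (p : ZMod (p ^ n)) ^ (n - 1) := by
    rw [← pow_add]; congr 1; omega
  have hshift : (p : ZMod (p ^ n)) ^ e * (f i - (c + j * (p : ZMod (p ^ n)) ^ (n - e - 1))) =
      (p : ZMod (p ^ n)) ^ e * (f i - c) - j * (p : ZMod (p ^ n)) ^ (n - 1) := by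
    rw [← hpow]; ring
  rw [hshift, sub_eq_zero]

lemma pow_dvd_cardCongr_of_le (hp : p ≠ 0) {k e : ℕ}
    (h : ∀ c, p ^ k ∣ cardCongr p n s f e c)
    {e' : ℕ} (hee' : e ≤ e') (he' : e' ≤ n) (c : ZMod (p ^ n)) :
    p ^ k ∣ cardCongr p n s f e' c := by
  induction e', hee' using Nat.le_induction generalizing c with
  | base => exact h c
  | succ e' _ ih =>
    rw [cardCongr_succ s f hp he']
    exact dvd_sum fun j _ => ih (by omega) _

end CardCongr

section ZeroSet

variable {p n : ℕ} (A : Finset (ZMod p × ZMod (p ^ n)))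

lemma chiSum_eq_sum_stdAddChar [NeZero (p ^ n)] (g : ZMod p × ZMod (p ^ n)) :
    chiSum p n g A = ∑ u ∈ A, stdAddChar (inn p n g u) := by
  simp [chiSum, chi, stdAddChar_apply, toCircle_apply]

lemma cardCongr_succ_eq_mul (hp : p.Prime) {i : ℕ} (hi : i < n) {b : ZMod p}
    (hz : (b, (p : ZMod (p ^ n)) ^ i) ∈ zeroSet p n A) (c : ZMod (p ^ n)) :
    cardCongr p n A Prod.snd (i + 1) c =
      p * #{u ∈ A | inn p n (b, (p : ZMod (p ^ n)) ^ i) u = (p : ZMod (p ^ n)) ^ i * c} := by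
  have : NeZero (p ^ n) := ⟨pow_ne_zero n hp.ne_zero⟩
  set g : ZMod p × ZMod (p ^ n) := (b, (p : ZMod (p ^ n)) ^ i)
  have hf : ∑ u ∈ A, stdAddChar (inn p n g u) = 0 := by
    rw [← chiSum_eq_sum_stdAddChar]; exact hz
  have hinn : ∀ u : ZMod p × ZMod (p ^ n), (p : ZMod (p ^ n)) ^ (i + 1) * (u.2 - c) =
      p * (inn p n g u - (p : ZMod (p ^ n)) ^ i * c) := by
    intro u
    simp only [g, inn]
    linear_combination (-(b.val : ZMod (p ^ n)) * u.1.val) * natCast_mul_pow_pred_eq_zero p n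
  simp only [cardCongr, hinn]
  have hfibre : ∀ j ∈ range p,
      #{u ∈ A | inn p n g u - (p : ZMod (p ^ n)) ^ i * c = j * (p : ZMod (p ^ n)) ^ (n - 1)} =
        #{u ∈ A | inn p n g u = (p : ZMod (p ^ n)) ^ i * c} := by
    intro j _
    simp only [sub_eq_iff_eq_add']
    exact card_filter_eq_add_natCast_mul_pow_pred hp A _ hf _ j
  rw [card_filter_natCast_mul_eq_zero hp.ne_zero (by omega), sum_congr rfl hfibre, sum_const,
    card_range, smul_eq_mul]

lemma cardCongr_succ_eq_mul_cardCongr (hp : p.Prime) {i : ℕ} (hi : i < n)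
    (hz : ((0 : ZMod p), (p : ZMod (p ^ n)) ^ i) ∈ zeroSet p n A) (c : ZMod (p ^ n)) :
    cardCongr p n A Prod.snd (i + 1) c = p * cardCongr p n A Prod.snd i c := by
  rw [cardCongr_succ_eq_mul A hp hi hz, cardCongr]
  congr 2
  refine filter_congr fun u _ => ?_
  simp [inn, mul_sub, sub_eq_zero]

end ZeroSet

/-- Divisibility property: if `(a, p^(i₁)), (0, p^(i₂)), …, (0, p^(i_s)) ∈ Z_A`
with `0 ≤ i₁ < ⋯ < i_s ≤ n - 1`, then `p^s ∣ |A|`. -/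
theorem pow_dvd_card_of_zeroSet (p n : ℕ) (hp : p.Prime) (hn : 1 ≤ n)
    (A : Finset (ZMod p × ZMod (p ^ n))) (a : ZMod p) (s : ℕ) (hs : 1 ≤ s)
    (i : Fin s → ℕ) (hmono : StrictMono i) (hle : ∀ r : Fin s, i r ≤ n - 1)
    (h1 : (a, (p : ZMod (p ^ n)) ^ i ⟨0, hs⟩) ∈ zeroSet p n A)
    (h2 : ∀ r : Fin s, r ≠ ⟨0, hs⟩ →
      ((0 : ZMod p), (p : ZMod (p ^ n)) ^ i r) ∈ zeroSet p n A) :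
    p ^ s ∣ A.card := by
  have hp0 := hp.ne_zero
  have hlt : ∀ r, i r < n := fun r => by have := hle r; omega
  have key : ∀ r (hr : r < s) c,
      p ^ (r + 1) ∣ cardCongr p n A Prod.snd (i ⟨r, hr⟩ + 1) c := by
    intro r
    induction r with
    | zero =>
      intro hr c
      rw [cardCongr_succ_eq_mul A hp (hlt _) h1 c, zero_add, pow_one]
      exact dvd_mul_right _ _
    | succ r ih =>
      intro hr c
      rw [cardCongr_succ_eq_mul_cardCongr A hp (hlt _) (h2 _ (by simp [Fin.ext_iff])) c, pow_succ']
      exact mul_dvd_mul_left p <| pow_dvd_cardCongr_of_le A Prod.snd hp0 (ih (by omega))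
        (hmono (Fin.mk_lt_mk.2 r.lt_succ_self)) (hlt _).le c
  have h := pow_dvd_cardCongr_of_le A Prod.snd hp0 (key (s - 1) (by omega)) (hlt _) le_rfl 0
  rwa [Nat.sub_add_cancel hs, cardCongr_self] at h
end

section
/- Let p be a prime and n a positive integer. If A ⊆ ℤ_p × ℤ_{p^n} is a spectral set with |A| ≥ 2, then p divides |A|. -/
open Complex Pointwise

/-- A nontrivial spectral set has size divisible by `p`. -/
theorem p_dvd_card_of_spectral (p n : ℕ) (hp : p.Prime) (hn : 1 ≤ n)
    (A : Finset (ZMod p × ZMod (p ^ n))) (hA : SpectralSet p n A) (hcard : 2 ≤ A.card) :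
    p ∣ A.card := by
  obtain ⟨B, hAB, hB⟩ := hA
  have h2 : 1 < B.card := by omega
  obtain ⟨b, hb, b', hb', hne⟩ := Finset.one_lt_card.mp h2
  have hsum : chiSum p n (b - b') A = 0 := hB b hb b' hb' hne
  set g := b - b' with hg
  haveI := Fact.mk hp
  have hpn : (p : ℕ) ^ n ≠ 0 := pow_ne_zero n hp.pos.ne'
  set ζ : ℂ := Complex.exp (2 * Real.pi * Complex.I / ((p : ℂ) ^ n)) with hζdef
  have hζ : IsPrimitiveRoot ζ (p ^ n) := by
    have := Complex.isPrimitiveRoot_exp (p ^ n) hpn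
    simpa [hζdef, Nat.cast_pow] using this
  set P : Polynomial ℤ := ∑ a ∈ A, Polynomial.X ^ (inn p n g a).val with hP
  have haeval : Polynomial.aeval ζ P = 0 := by
    rw [hP, map_sum (Polynomial.aeval ζ) _ A]
    have hc : ∀ a ∈ A, Polynomial.aeval ζ ((Polynomial.X : Polynomial ℤ) ^ (inn p n g a).val)
        = chi p n g a := by
      intro a _
      rw [map_pow, Polynomial.aeval_X, hζdef, chi, ← Complex.exp_nat_mul]
      ring_nf
    rw [Finset.sum_congr rfl hc]
    exact hsum
  have hint : IsIntegral ℤ ζ := hζ.isIntegral (pow_pos hp.pos n)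
  have hdvd : Polynomial.cyclotomic (p ^ n) ℤ ∣ P := by
    rw [Polynomial.cyclotomic_eq_minpoly hζ (pow_pos hp.pos n)]
    exact minpoly.isIntegrallyClosed_dvd hint haeval
  have heval := Polynomial.eval_dvd (x := (1 : ℤ)) hdvd
  obtain ⟨m, rfl⟩ := Nat.exists_eq_succ_of_ne_zero (by omega : n ≠ 0)
  rw [Polynomial.eval_one_cyclotomic_prime_pow] at heval
  have hPe : P.eval 1 = (A.card : ℤ) := by
    rw [hP, Polynomial.eval_finset_sum]
    simp
  rw [hPe] at heval
  exact_mod_cast heval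
end
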